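/- For M = 2, h(a, b) = E[max(a₁ + b₁Z, a₂ + b₂Z)] − max(a₁, a₂) satisfies the closed form: if b₁ ≠ b₂ and a₂ ≥ a₁ (WLOG), then h(a,b) = |b₂ − b₁| f(−|a₂ − a₁|/|b₂ − b₁|), where f(z) = z Φ(z) + φ(z), with Φ and φ the standard normal CDF and density. -/

import Mathlib

open MeasureTheory ProbabilityTheory Real Set Filter

/-- The standard normal density `φ(z) = exp(−z²/2)/√(2π)`. -/
noncomputable def stdNormalPDF (z : ℝ) : ℝ :=
  Real.exp (-z ^ 2 / 2) / Real.sqrt (2 * Real.pi)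

/-- The standard normal CDF `Φ(z) = ∫_{−∞}^z φ(t) dt`. -/
noncomputable def stdNormalCDF (z : ℝ) : ℝ :=
  ∫ t in Set.Iic z, stdNormalPDF t

/-- The standard normal loss function `f(z) = zΦ(z) + φ(z)`. -/
noncomputable def normalLoss (z : ℝ) : ℝ :=
  z * stdNormalCDF z + stdNormalPDF z

/-- The knowledge-gradient function `h(a,b) = E[max_i (aᵢ + bᵢ Z)] − max_i aᵢ`
with `Z ~ N(0,1)`. -/
noncomputable def kgH {M : ℕ} (a b : Fin M → ℝ) : ℝ :=
  (∫ z, (⨆ i, (a i + b i * z)) ∂(gaussianReal 0 1)) - ⨆ i, a i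

/-! The difference of the two alternatives is `(a₀ - a₁) + (b₀ - b₁) Z`, and
`max(X, Y) = Y + (X - Y)⁺`; since `E[a₁ + b₁ Z] = a₁`, the knowledge gradient is `E[(c + d Z)⁺]`
with `c = a₀ - a₁ ≤ 0` and `d = b₀ - b₁ ≠ 0`. The symmetry `Z ↦ -Z` reduces to `d > 0`, and
there the positive part lives on `Z > -c/d`, where `∫ φ = Φ(c/d)` and `∫ z φ(z) dz = φ(c/d)`
because `-φ` is an antiderivative of `z φ(z)`. -/

lemma gaussianPDFReal_zero_one : gaussianPDFReal 0 1 = stdNormalPDF := by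
  ext z
  simp [gaussianPDFReal, stdNormalPDF, div_eq_inv_mul, mul_comm]

lemma stdNormalPDF_neg (z : ℝ) : stdNormalPDF (-z) = stdNormalPDF z := by
  simp [stdNormalPDF]

lemma integrable_stdNormalPDF : Integrable stdNormalPDF :=
  gaussianPDFReal_zero_one ▸ integrable_gaussianPDFReal 0 1

lemma integral_stdNormalPDF : ∫ z, stdNormalPDF z = 1 :=
  gaussianPDFReal_zero_one ▸ integral_gaussianPDFReal_eq_one 0 one_ne_zero

lemma integrable_mul_stdNormalPDF : Integrable fun z => z * stdNormalPDF z := by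
  refine ((integrable_mul_exp_neg_mul_sq (b := 1 / 2) (by norm_num)).div_const
    √(2 * π)).congr (ae_of_all _ fun z => ?_)
  simp only [stdNormalPDF]
  ring_nf

lemma hasDerivAt_stdNormalPDF (x : ℝ) :
    HasDerivAt stdNormalPDF (-x * stdNormalPDF x) x := by
  have h : HasDerivAt (fun z : ℝ => -z ^ 2 / 2) (-x) x :=
    (((hasDerivAt_pow 2 x).neg).div_const 2).congr_deriv (by ring)
  exact (h.exp.div_const √(2 * π)).congr_deriv (by rw [stdNormalPDF]; ring)

lemma tendsto_stdNormalPDF_atTop : Tendsto stdNormalPDF atTop (nhds 0) := by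
  have h : Tendsto (fun z : ℝ => -z ^ 2 / 2) atTop atBot :=
    (tendsto_neg_atBot_iff.mpr (tendsto_pow_atTop two_ne_zero)).atBot_div_const two_pos
  have h' := (tendsto_exp_atBot.comp h).div_const √(2 * π)
  rwa [zero_div] at h'

lemma integral_Ioi_stdNormalPDF (s : ℝ) :
    ∫ z in Ioi s, stdNormalPDF z = 1 - stdNormalCDF s := by
  rw [← integral_stdNormalPDF, ← intervalIntegral.integral_Iic_add_Ioi
    integrable_stdNormalPDF.integrableOn integrable_stdNormalPDF.integrableOn, stdNormalCDF]
  ring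

lemma stdNormalCDF_neg (s : ℝ) : stdNormalCDF (-s) = 1 - stdNormalCDF s := by
  rw [stdNormalCDF, ← integral_Ioi_stdNormalPDF, ← neg_neg s, ← integral_comp_neg_Iic]
  simp only [neg_neg, stdNormalPDF_neg]

lemma integral_Ioi_mul_stdNormalPDF (s : ℝ) :
    ∫ z in Ioi s, z * stdNormalPDF z = stdNormalPDF s := by
  have h := integral_Ioi_of_hasDerivAt_of_tendsto' (f := -stdNormalPDF) (a := s)
    (fun x _ => by simpa using (hasDerivAt_stdNormalPDF x).neg)
    integrable_mul_stdNormalPDF.integrableOn tendsto_stdNormalPDF_atTop.neg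
  simpa using h

lemma integral_gaussianReal_zero_one (g : ℝ → ℝ) :
    ∫ z, g z ∂gaussianReal 0 1 = ∫ z, stdNormalPDF z * g z := by
  simp [integral_gaussianReal_eq_integral_smul one_ne_zero, gaussianPDFReal_zero_one]

lemma integrable_id_gaussianReal (μ : ℝ) (v : NNReal) :
    Integrable (fun z => z) (gaussianReal μ v) :=
  (memLp_id_gaussianReal 1).integrable le_rfl

lemma integrable_affine_gaussianReal (μ : ℝ) (v : NNReal) (c d : ℝ) :
    Integrable (fun z => c + d * z) (gaussianReal μ v) :=
  (integrable_const c).add ((integrable_id_gaussianReal μ v).const_mul d)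

lemma integral_affine_gaussianReal (μ : ℝ) (v : NNReal) (c d : ℝ) :
    ∫ z, (c + d * z) ∂gaussianReal μ v = c + d * μ := by
  rw [integral_add (integrable_const c) ((integrable_id_gaussianReal μ v).const_mul d),
    integral_const_mul, integral_id_gaussianReal]
  simp

lemma integral_posPart_affine_gaussianReal_of_pos (c : ℝ) {d : ℝ} (hd : 0 < d) :
    ∫ z, max (c + d * z) 0 ∂gaussianReal 0 1 = d * normalLoss (c / d) := by
  have hpos : ∀ z, 0 < c + d * z ↔ z ∈ Ioi (-(c / d)) := fun z => by
    rw [mem_Ioi, neg_lt_iff_pos_add, add_div' _ _ _ hd.ne', div_pos_iff_of_pos_right hd,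
      add_comm, mul_comm z]
  have hind : (fun z => stdNormalPDF z * max (c + d * z) 0)
      = (Ioi (-(c / d))).indicator fun z => c * stdNormalPDF z + d * (z * stdNormalPDF z) := by
    ext z
    by_cases hz : 0 < c + d * z
    · rw [indicator_of_mem ((hpos z).1 hz), max_eq_left hz.le]
      ring
    · rw [indicator_of_notMem (mt (hpos z).2 hz), max_eq_right (not_lt.1 hz), mul_zero]
  rw [integral_gaussianReal_zero_one, hind, integral_indicator measurableSet_Ioi,
    integral_add (integrable_stdNormalPDF.const_mul c).integrableOn
      (integrable_mul_stdNormalPDF.const_mul d).integrableOn,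
    integral_const_mul, integral_const_mul, integral_Ioi_stdNormalPDF,
    integral_Ioi_mul_stdNormalPDF, stdNormalCDF_neg, stdNormalPDF_neg, normalLoss]
  field_simp
  ring

lemma integral_posPart_affine_gaussianReal (c : ℝ) {d : ℝ} (hd : d ≠ 0) :
    ∫ z, max (c + d * z) 0 ∂gaussianReal 0 1 = |d| * normalLoss (c / |d|) := by
  rcases hd.lt_or_gt with hneg | hpos
  · have hsymm : ∫ z, max (c + d * z) 0 ∂gaussianReal 0 1
        = ∫ z, max (c + -d * z) 0 ∂gaussianReal 0 1 := by
      conv_rhs => rw [← neg_zero, ← gaussianReal_map_neg]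
      rw [integral_map measurable_neg.aemeasurable (by fun_prop)]
      simp only [neg_mul_neg, neg_zero]
    rw [hsymm, integral_posPart_affine_gaussianReal_of_pos c (neg_pos.2 hneg), abs_of_neg hneg]
  · rw [integral_posPart_affine_gaussianReal_of_pos c hpos, abs_of_pos hpos]

lemma ciSup_fin_two {α : Type*} [ConditionallyCompleteLinearOrder α] (f : Fin 2 → α) :
    ⨆ i, f i = max (f 0) (f 1) :=
  le_antisymm (ciSup_le fun i => by fin_cases i <;> simp)
    (max_le (le_ciSup (finite_range f).bddAbove 0) (le_ciSup (finite_range f).bddAbove 1))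

/-- Closed form of the knowledge gradient for two alternatives: if `b₁ ≠ b₂`
and `a₁ ≤ a₂`, then `h(a,b) = |b₂ − b₁| · f(−|a₂ − a₁|/|b₂ − b₁|)` where
`f(z) = zΦ(z) + φ(z)` is the standard normal loss function. -/
theorem kgH_two_alternatives_closed_form (a b : Fin 2 → ℝ)
    (hb : b 0 ≠ b 1) (ha : a 0 ≤ a 1) :
    kgH a b = |b 1 - b 0| * normalLoss (-|a 1 - a 0| / |b 1 - b 0|) := by
  have hmax : ∀ z : ℝ, ⨆ i, (a i + b i * z)
      = (a 1 + b 1 * z) + max ((a 0 - a 1) + (b 0 - b 1) * z) 0 := fun z => by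
    rw [ciSup_fin_two, add_comm (a 1 + b 1 * z), ← max_add_add_right, zero_add]
    congr 1
    ring
  have hint := (integrable_affine_gaussianReal 0 1 (a 0 - a 1) (b 0 - b 1)).pos_part
  rw [kgH, ciSup_fin_two a, max_eq_right ha, funext hmax,
    integral_add (integrable_affine_gaussianReal 0 1 _ _) hint, integral_affine_gaussianReal,
    integral_posPart_affine_gaussianReal _ (sub_ne_zero.2 hb), abs_sub_comm (b 1),
    abs_of_nonneg (sub_nonneg.2 ha), neg_sub]
  ring
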